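/- arXiv:1412.0791 — 2 statements merged into one kernel-verified Lean document; each statement's English description precedes it below -/
import Mathlib

section
/- Suppose for each τ ∈ ℕ: L(τ+1) − L(τ) + V·y₀(τ) ≤ B + V·y₀ᵒᵖᵗ, where L : ℕ → ℝ is nonnegative with L(0) = 0, V > 0, and B ≥ 0. Then for all integers t > 0: (1/t)∑_{τ=0}^{t−1} y₀(τ) ≤ y₀ᵒᵖᵗ + B/V. -/
theorem objective_telescope_bound (L y₀ : ℕ → ℝ) (V B y₀opt : ℝ)
    (hL : ∀ τ, 0 ≤ L τ) (hL0 : L 0 = 0) (hV : 0 < V) (hB : 0 ≤ B)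
    (h : ∀ τ, L (τ + 1) - L τ + V * y₀ τ ≤ B + V * y₀opt) :
    ∀ t : ℕ, 0 < t →
      (1 / (t : ℝ)) * ∑ τ ∈ Finset.range t, y₀ τ ≤ y₀opt + B / V := by
  intro t ht
  have htpos : (0:ℝ) < t := by exact_mod_cast ht
  have hsum : ∑ τ ∈ Finset.range t, (L (τ+1) - L τ + V * y₀ τ) ≤
      ∑ τ ∈ Finset.range t, (B + V * y₀opt) :=
    Finset.sum_le_sum fun τ _ => h τ
  rw [Finset.sum_add_distrib, Finset.sum_range_sub, Finset.sum_const,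
    Finset.card_range, nsmul_eq_mul, ← Finset.mul_sum] at hsum
  have hBV : B / V * V = B := div_mul_cancel₀ B (ne_of_gt hV)
  have key : ∑ τ ∈ Finset.range t, y₀ τ ≤ t * (y₀opt + B / V) := by
    nlinarith [hL t, hsum]
  rw [one_div, inv_mul_le_iff₀ htpos]
  nlinarith [key]
end

section
/- Let X ⊆ ℝᴺ be a convex compact set, f, g₁, …, g_K : ℝᴺ → ℝ continuous convex functions, c ∈ ℝᴷ, and suppose {x ∈ X | gₖ(x) ≤ cₖ ∀k} is nonempty with optimal value f* = min over this set of f. Let x : ℕ → X be any sequence such that limsup_{t→∞} (1/t)∑_{τ<t} gₖ(x(τ)) ≤ cₖ for all k. Then limsup_{t→∞} (1/t)∑_{τ<t} f(x(τ)) ≥ f*. -/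
open Filter

private lemma avg_bound_aux (h : ℕ → ℝ) (M : ℝ) (hb : ∀ τ, h τ ≤ M) (t : ℕ) :
    (1 / (t : ℝ)) * ∑ τ ∈ Finset.range t, h τ ≤ max M 0 := by
  rcases Nat.eq_zero_or_pos t with ht | ht
  · simp [ht]
  · have hsum : ∑ τ ∈ Finset.range t, h τ ≤ (t : ℝ) * M := by
      calc ∑ τ ∈ Finset.range t, h τ ≤ ∑ τ ∈ Finset.range t, M :=
            Finset.sum_le_sum fun i _ => hb i
        _ = (t : ℝ) * M := by simp [mul_comm]
    have htpos : (0 : ℝ) < t := by exact_mod_cast ht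
    have : (1 / (t : ℝ)) * ∑ τ ∈ Finset.range t, h τ ≤ (1 / (t : ℝ)) * ((t : ℝ) * M) :=
      mul_le_mul_of_nonneg_left hsum (by positivity)
    calc (1 / (t : ℝ)) * ∑ τ ∈ Finset.range t, h τ ≤ (1 / (t : ℝ)) * ((t : ℝ) * M) := this
      _ = M := by field_simp
      _ ≤ max M 0 := le_max_left _ _

private lemma jensen_avg {N : ℕ} {X : Set (Fin N → ℝ)}
    (h : (Fin N → ℝ) → ℝ) (hcv : ConvexOn ℝ X h)
    (x : ℕ → Fin N → ℝ) (hx : ∀ τ, x τ ∈ X) (t : ℕ) (ht : 0 < t) :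
    h ((1 / (t : ℝ)) • ∑ τ ∈ Finset.range t, x τ) ≤
      (1 / (t : ℝ)) * ∑ τ ∈ Finset.range t, h (x τ) := by
  have hw : ∀ i ∈ Finset.range t, (0 : ℝ) ≤ (fun _ => (1:ℝ)) i := fun _ _ => zero_le_one
  have hwpos : (0 : ℝ) < ∑ _i ∈ Finset.range t, (1 : ℝ) := by
    simp only [Finset.sum_const, Finset.card_range, nsmul_eq_mul, mul_one]
    exact_mod_cast ht
  have key := hcv.map_centerMass_le hw hwpos (fun i _ => hx i)
  have hcm : (Finset.range t).centerMass (fun _ => (1:ℝ)) x =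
      (1 / (t : ℝ)) • ∑ τ ∈ Finset.range t, x τ := by
    simp [Finset.centerMass, one_div]
  have hcm2 : (Finset.range t).centerMass (fun _ => (1:ℝ)) (h ∘ x) =
      (1 / (t : ℝ)) * ∑ τ ∈ Finset.range t, h (x τ) := by
    simp [Finset.centerMass, one_div, smul_eq_mul, Function.comp]
  rw [hcm, hcm2] at key
  exact key

private lemma avg_mem {N : ℕ} {X : Set (Fin N → ℝ)} (hXc : Convex ℝ X)
    (x : ℕ → Fin N → ℝ) (hx : ∀ τ, x τ ∈ X) (t : ℕ) (ht : 0 < t) :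
    (1 / (t : ℝ)) • ∑ τ ∈ Finset.range t, x τ ∈ X := by
  have hw : ∀ i ∈ Finset.range t, (0 : ℝ) ≤ (fun _ => (1:ℝ)) i := fun _ _ => zero_le_one
  have hwpos : (0 : ℝ) < ∑ _i ∈ Finset.range t, (1 : ℝ) := by
    simp only [Finset.sum_const, Finset.card_range, nsmul_eq_mul, mul_one]
    exact_mod_cast ht
  have := hXc.centerMass_mem hw hwpos (fun i _ => hx i)
  have hcm : (Finset.range t).centerMass (fun _ => (1:ℝ)) x =
      (1 / (t : ℝ)) • ∑ τ ∈ Finset.range t, x τ := by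
    simp [Finset.centerMass, one_div]
  rwa [hcm] at this

set_option maxHeartbeats 1000000 in
theorem time_average_no_better_than_static (N K : ℕ) (X : Set (Fin N → ℝ))
    (hXc : Convex ℝ X) (hXk : IsCompact X)
    (f : (Fin N → ℝ) → ℝ) (g : Fin K → (Fin N → ℝ) → ℝ) (c : Fin K → ℝ)
    (hfc : ContinuousOn f X) (hfcv : ConvexOn ℝ X f)
    (hgc : ∀ k, ContinuousOn (g k) X) (hgcv : ∀ k, ConvexOn ℝ X (g k))
    (fstar : ℝ)
    (hfstar : IsLeast (f '' {x | x ∈ X ∧ ∀ k, g k x ≤ c k}) fstar)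
    (x : ℕ → Fin N → ℝ) (hx : ∀ τ, x τ ∈ X)
    (hcon : ∀ k, Filter.limsup
        (fun t : ℕ => (1 / (t : ℝ)) * ∑ τ ∈ Finset.range t, g k (x τ))
        Filter.atTop ≤ c k) :
    fstar ≤ Filter.limsup
      (fun t : ℕ => (1 / (t : ℝ)) * ∑ τ ∈ Finset.range t, f (x τ))
      Filter.atTop := by
  by_contra hcontra
  push_neg at hcontra
  -- X is nonempty
  obtain ⟨x0, hx0, hfx0⟩ := hfstar.1
  have hXne : X.Nonempty := ⟨x0, hx0.1⟩
  -- the averages x̄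
  set xbar : ℕ → (Fin N → ℝ) :=
    fun t => (1 / (t : ℝ)) • ∑ τ ∈ Finset.range t, x τ with hxbar
  have hxbarmem : ∀ t : ℕ, xbar (t + 1) ∈ X := fun t =>
    avg_mem hXc x hx (t + 1) (Nat.succ_pos t)
  -- boundedness of the f-averages
  have hbddf : IsBoundedUnder (· ≤ ·) atTop
      (fun t : ℕ => (1 / (t : ℝ)) * ∑ τ ∈ Finset.range t, f (x τ)) := by
    obtain ⟨z, hz, hzmax⟩ := hXk.exists_isMaxOn hXne hfc
    exact Filter.isBoundedUnder_of ⟨max (f z) 0, fun t =>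
      avg_bound_aux (fun τ => f (x τ)) (f z) (fun τ => hzmax (hx τ)) t⟩
  -- choose r between limsup and fstar
  set L := Filter.limsup
      (fun t : ℕ => (1 / (t : ℝ)) * ∑ τ ∈ Finset.range t, f (x τ)) atTop with hL
  set r := (L + fstar) / 2 with hr
  have hLr : L < r := by rw [hr]; linarith
  have hrf : r < fstar := by rw [hr]; linarith
  have hev : ∀ᶠ t : ℕ in atTop,
      (1 / (t : ℝ)) * ∑ τ ∈ Finset.range t, f (x τ) < r :=
    Filter.eventually_lt_of_limsup_lt hLr hbddf
  -- compactness: convergent subsequence of x̄(n+1)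
  obtain ⟨xs, hxsX, φ, hφ, hconv⟩ :=
    hXk.tendsto_subseq (fun n => hxbarmem n)
  have hφt : Tendsto (fun n => φ n + 1) atTop atTop :=
    tendsto_atTop_mono (fun n => Nat.le_succ (φ n)) hφ.tendsto_atTop
  -- x̄ along the subsequence tends to xs within X
  have htendW : Tendsto (fun n => xbar (φ n + 1)) atTop (nhdsWithin xs X) :=
    tendsto_nhdsWithin_of_tendsto_nhds_of_eventually_within _ hconv
      (Filter.Eventually.of_forall fun n => hxbarmem (φ n))
  -- f(xs) ≤ r
  have hfxs : f xs ≤ r := by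
    have hft : Tendsto (fun n => f (xbar (φ n + 1))) atTop (nhds (f xs)) :=
      (hfc.continuousWithinAt hxsX).tendsto.comp htendW
    refine le_of_tendsto hft ?_
    have hev2 : ∀ᶠ n : ℕ in atTop,
        (1 / ((φ n + 1 : ℕ) : ℝ)) * ∑ τ ∈ Finset.range (φ n + 1), f (x τ) < r :=
      hφt.eventually hev
    filter_upwards [hev2] with n hn
    exact le_of_lt (lt_of_le_of_lt
      (jensen_avg f hfcv x hx (φ n + 1) (Nat.succ_pos _)) hn)
  -- g k (xs) ≤ c k
  have hgxs : ∀ k, g k xs ≤ c k := by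
    intro k
    have hgt : Tendsto (fun n => g k (xbar (φ n + 1))) atTop (nhds (g k xs)) :=
      ((hgc k).continuousWithinAt hxsX).tendsto.comp htendW
    have hbddg : IsBoundedUnder (· ≤ ·) atTop
        (fun t : ℕ => (1 / (t : ℝ)) * ∑ τ ∈ Finset.range t, g k (x τ)) := by
      obtain ⟨z, hz, hzmax⟩ := hXk.exists_isMaxOn hXne (hgc k)
      exact Filter.isBoundedUnder_of ⟨max (g k z) 0, fun t =>
        avg_bound_aux (fun τ => g k (x τ)) (g k z) (fun τ => hzmax (hx τ)) t⟩
    refine le_of_forall_pos_le_add fun ε hε => ?_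
    have hlt : Filter.limsup
        (fun t : ℕ => (1 / (t : ℝ)) * ∑ τ ∈ Finset.range t, g k (x τ)) atTop
        < c k + ε := lt_of_le_of_lt (hcon k) (by linarith)
    have hevg := Filter.eventually_lt_of_limsup_lt hlt hbddg
    refine le_of_tendsto hgt ?_
    have hev2 : ∀ᶠ n : ℕ in atTop,
        (1 / ((φ n + 1 : ℕ) : ℝ)) * ∑ τ ∈ Finset.range (φ n + 1), g k (x τ)
          < c k + ε := hφt.eventually hevg
    filter_upwards [hev2] with n hn
    exact le_of_lt (lt_of_le_of_lt
      (jensen_avg (g k) (hgcv k) x hx (φ n + 1) (Nat.succ_pos _)) hn)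
  -- xs is feasible, so fstar ≤ f xs, contradiction
  have : fstar ≤ f xs := hfstar.2 ⟨xs, ⟨hxsX, hgxs⟩, rfl⟩
  linarith
end
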